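/- For all integers n, Δ with 0 < Δ < n − 1, the strict inequality (n−Δ)!/C(n,Δ) < n!/|B(Δ)| holds, where B(Δ) is the Ulam ball of radius Δ around the identity; for all 0 ≤ Δ ≤ n the non-strict inequality holds. -/

import Mathlib

/-- One-line notation of a permutation of `Fin n`. -/
def oneLine {n : ℕ} (σ : Equiv.Perm (Fin n)) : List (Fin n) := List.ofFn σ

/-- A translocation: the permutation obtained from the identity by removing the
symbol at position `i` and inserting it at another position `j`. -/
def IsTranslocation {n : ℕ} (τ : Equiv.Perm (Fin n)) : Prop :=
  ∃ i j : Fin n, i ≠ j ∧ oneLine τ = (((List.finRange n).eraseIdx i).insertIdx j i)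

/-- Ulam distance: the least `m` such that `τ = σ τ₁ ⋯ τ_m` for translocations `τᵢ`. -/
noncomputable def ulamDist {n : ℕ} (σ τ : Equiv.Perm (Fin n)) : ℕ :=
  sInf {m | ∃ L : List (Equiv.Perm (Fin n)), L.length = m ∧
    (∀ x ∈ L, IsTranslocation x) ∧ τ = σ * L.prod}

/-!
Each translocation is increasing off the single position where it inserts a symbol, so a
product of `m` translocations is increasing off at most `m` positions. Hence every `σ` in the
Ulam ball of radius `Δ` is increasing on the complement of some `Δ`-set `C`, and such a `σ` is
determined by the injection `σ|_C : C ↪ Fin n`: the complement of `C` and its image are then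
fixed, and there is only one increasing bijection between them. This gives
`|B(Δ)| ≤ C(n,Δ) · n!/(n-Δ)!`, with strict inequality for `0 < Δ < n` because the identity is
counted once for every `C`. Multiplying out `n! = C(n,Δ) Δ! (n-Δ)!` yields the comparison.
-/

open Equiv Finset

theorem List.eraseIdx_ofFn {α : Type*} {m : ℕ} (f : Fin (m + 1) → α) (j : Fin (m + 1)) :
    (List.ofFn f).eraseIdx j = List.ofFn (f ∘ j.succAbove) := by
  refine List.ext_getElem (by simp [List.length_eraseIdx, j.is_le]) fun k h₁ h₂ => ?_
  simp only [List.getElem_eraseIdx, List.getElem_ofFn, Function.comp_apply, Fin.succAbove]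
  split_ifs <;> simp_all [Fin.lt_def]

theorem strictMonoOn_compl_singleton_of_strictMono_comp_succAbove {α : Type*} [Preorder α]
    {m : ℕ} {f : Fin (m + 1) → α} {j : Fin (m + 1)} (hf : StrictMono (f ∘ j.succAbove)) :
    StrictMonoOn f {j}ᶜ := by
  rintro _ ha _ hb hab
  obtain ⟨a, rfl⟩ := Fin.exists_succAbove_eq ha
  obtain ⟨b, rfl⟩ := Fin.exists_succAbove_eq hb
  exact hf (Fin.succAbove_lt_succAbove_iff.mp hab)

theorem IsTranslocation.exists_strictMonoOn {n : ℕ} {τ : Perm (Fin n)}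
    (hτ : IsTranslocation τ) : ∃ j, StrictMonoOn τ {j}ᶜ := by
  obtain ⟨i, j, -, hτ⟩ := hτ
  cases n with
  | zero => exact i.elim0
  | succ m =>
    refine ⟨j, strictMonoOn_compl_singleton_of_strictMono_comp_succAbove ?_⟩
    have hsorted : ((List.ofFn τ).eraseIdx j).Pairwise (· < ·) := by
      rw [← oneLine, hτ, List.eraseIdx_insertIdx_self]
      exact (List.pairwise_lt_finRange _).sublist (List.eraseIdx_sublist _ _)
    rwa [List.eraseIdx_ofFn, List.pairwise_ofFn, ← StrictMono] at hsorted

theorem isTranslocation_swap_castSucc_succ {m : ℕ} (i : Fin m) :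
    IsTranslocation (swap i.castSucc i.succ) := by
  refine ⟨i.castSucc, i.succ, Fin.castSucc_lt_succ.ne, ?_⟩
  refine List.ext_getElem (by simp [oneLine, List.length_insertIdx, List.length_eraseIdx])
    fun k h₁ h₂ => ?_
  simp only [oneLine, List.getElem_ofFn, List.getElem_insertIdx, List.getElem_eraseIdx,
    List.getElem_finRange, swap_apply_def, Fin.ext_iff, Fin.val_succ, Fin.val_castSucc]
  split_ifs <;> simp only [Fin.val_cast, Fin.val_succ, Fin.val_castSucc] <;> omega

theorem exists_translocations_prod_eq {n : ℕ} (σ : Perm (Fin n)) :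
    ∃ L : List (Perm (Fin n)), (∀ τ ∈ L, IsTranslocation τ) ∧ L.prod = σ := by
  cases n with
  | zero => exact ⟨[], by simp, Subsingleton.elim _ _⟩
  | succ m =>
    obtain ⟨L, hL, hσ⟩ := Submonoid.exists_list_of_mem_closure
      ((Perm.mclosure_swap_castSucc_succ m).symm ▸ Submonoid.mem_top σ)
    refine ⟨L, fun τ hτ => ?_, hσ⟩
    obtain ⟨i, rfl⟩ := hL τ hτ
    exact isTranslocation_swap_castSucc_succ i

theorem ulamDist_self {n : ℕ} (σ : Perm (Fin n)) : ulamDist σ σ = 0 :=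
  Nat.eq_zero_of_le_zero <| Nat.sInf_le ⟨[], rfl, by simp, by simp⟩

theorem exists_translocations_length_eq_ulamDist {n : ℕ} (σ : Perm (Fin n)) :
    ∃ L : List (Perm (Fin n)), L.length = ulamDist 1 σ ∧ (∀ τ ∈ L, IsTranslocation τ) ∧
      L.prod = σ := by
  obtain ⟨L, hL, hσ⟩ := exists_translocations_prod_eq σ
  obtain ⟨L', hlen, hL', hσ'⟩ := Nat.sInf_mem (s := {m | ∃ L : List (Perm (Fin n)),
    L.length = m ∧ (∀ x ∈ L, IsTranslocation x) ∧ σ = 1 * L.prod})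
    ⟨_, L, rfl, hL, by simp [hσ]⟩
  exact ⟨L', hlen, hL', by simp [hσ']⟩

theorem exists_strictMonoOn_compl_of_translocations {n : ℕ} (L : List (Perm (Fin n)))
    (hL : ∀ τ ∈ L, IsTranslocation τ) :
    ∃ C : Finset (Fin n), #C ≤ L.length ∧ StrictMonoOn L.prod (C : Set (Fin n))ᶜ := by
  induction L with
  | nil => exact ⟨∅, by simp, fun a _ b _ hab => by simpa using hab⟩
  | cons τ L ih =>
    obtain ⟨C, hC, hmono⟩ := ih fun x hx => hL x (List.mem_cons_of_mem _ hx)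
    obtain ⟨j, hj⟩ := (hL τ List.mem_cons_self).exists_strictMonoOn
    refine ⟨insert (L.prod⁻¹ j) C, by grind [Finset.card_insert_le], ?_⟩
    rw [List.prod_cons, Perm.coe_mul]
    refine hj.comp (hmono.mono fun a ha => ?_) fun a ha => ?_
    · exact fun hC => ha (mem_insert_of_mem hC)
    · rintro rfl
      exact ha (by simp)

theorem exists_card_eq_strictMonoOn_compl_of_ulamDist_le {n Δ : ℕ} {σ : Perm (Fin n)}
    (hΔ : Δ ≤ n) (hσ : ulamDist 1 σ ≤ Δ) :
    ∃ C : Finset (Fin n), #C = Δ ∧ StrictMonoOn σ (C : Set (Fin n))ᶜ := by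
  obtain ⟨L, hlen, hL, rfl⟩ := exists_translocations_length_eq_ulamDist σ
  obtain ⟨C, hC, hmono⟩ := exists_strictMonoOn_compl_of_translocations L hL
  obtain ⟨C', hCC', hC'⟩ := Finset.exists_superset_card_eq (hC.trans (hlen ▸ hσ))
    (by simpa using hΔ)
  exact ⟨C', hC', hmono.mono (Set.compl_subset_compl.mpr (by exact_mod_cast hCC'))⟩

theorem Equiv.Perm.eq_of_strictMonoOn_of_eqOn_compl {α : Type*} [LinearOrder α]
    [WellFoundedLT α] {σ τ : Perm α} {s : Set α} (hσ : StrictMonoOn σ s)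
    (hτ : StrictMonoOn τ s) (h : Set.EqOn σ τ sᶜ) : σ = τ := by
  have himage : σ '' s = τ '' s :=
    calc σ '' s = (σ '' sᶜ)ᶜ := by rw [← Equiv.image_compl, compl_compl]
      _ = (τ '' sᶜ)ᶜ := by rw [h.image_eq]
      _ = τ '' s := by rw [← Equiv.image_compl, compl_compl]
  have hs : s.domRestrict σ = s.domRestrict τ := by
    rwa [← hσ.domRestrict.range_inj hτ.domRestrict, Set.range_domRestrict,
      Set.range_domRestrict]
  ext x
  by_cases hx : x ∈ s
  · exact congrFun hs ⟨x, hx⟩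
  · exact h hx

open Classical in
noncomputable def strictMonoOnPerms {α : Type*} [LinearOrder α] [Fintype α] (s : Set α) :
    Finset (Perm α) :=
  {σ | StrictMonoOn σ s}

theorem card_strictMonoOnPerms_compl_le {α : Type*} [LinearOrder α] [Fintype α]
    (C : Finset α) :
    #(strictMonoOnPerms (C : Set α)ᶜ) ≤ (Fintype.card α).descFactorial #C := by
  classical
  let restrict (σ : Perm α) : C ↪ α := (Function.Embedding.subtype _).trans σ.toEmbedding
  calc #(strictMonoOnPerms (C : Set α)ᶜ)
      ≤ #(univ : Finset (C ↪ α)) := by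
        refine card_le_card_of_injOn restrict (fun _ _ => mem_coe.mpr (mem_univ _)) ?_
        intro σ hσ τ hτ hστ
        simp only [strictMonoOnPerms, mem_coe, mem_filter, mem_univ, true_and] at hσ hτ
        refine Perm.eq_of_strictMonoOn_of_eqOn_compl hσ hτ fun x hx => ?_
        exact DFunLike.congr_fun hστ ⟨x, by simpa using hx⟩
    _ = (Fintype.card α).descFactorial #C := by
        rw [card_univ, Fintype.card_embedding_eq, Fintype.card_coe]

theorem Finset.card_biUnion_lt_sum_card {ι β : Type*} [DecidableEq ι] [DecidableEq β]
    {s : Finset ι} {t : ι → Finset β} {i j : ι} (hi : i ∈ s) (hj : j ∈ s) (hij : i ≠ j)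
    {x : β} (hxi : x ∈ t i) (hxj : x ∈ t j) :
    #(s.biUnion t) < ∑ k ∈ s, #(t k) := by
  have hinter : 0 < #(t i ∩ (s.erase i).biUnion t) :=
    card_pos.mpr ⟨x, mem_inter.mpr
      ⟨hxi, mem_biUnion.mpr ⟨j, mem_erase.mpr ⟨hij.symm, hj⟩, hxj⟩⟩⟩
  calc #(s.biUnion t) = #(t i ∪ (s.erase i).biUnion t) := by
        rw [← biUnion_insert, insert_erase hi]
    _ < #(t i) + #((s.erase i).biUnion t) := by
        have := card_union_add_card_inter (t i) ((s.erase i).biUnion t)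
        omega
    _ ≤ #(t i) + ∑ k ∈ s.erase i, #(t k) := Nat.add_le_add_left card_biUnion_le _
    _ = ∑ k ∈ s, #(t k) := add_sum_erase s (fun k => #(t k)) hi

theorem Nat.one_lt_choose {n k : ℕ} (hk₀ : 0 < k) (hkn : k < n) : 1 < n.choose k := by
  obtain ⟨k, rfl⟩ := Nat.exists_eq_succ_of_ne_zero hk₀.ne'
  obtain ⟨n, rfl⟩ := Nat.exists_eq_succ_of_ne_zero (by omega : n ≠ 0)
  have := Nat.choose_pos (show k ≤ n by omega)
  have := Nat.choose_pos (show k + 1 ≤ n by omega)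
  rw [Nat.choose_succ_succ']
  omega

theorem sum_card_strictMonoOnPerms_compl_le {α : Type*} [LinearOrder α] [Fintype α] (k : ℕ) :
    ∑ C ∈ powersetCard k (univ : Finset α), #(strictMonoOnPerms (C : Set α)ᶜ) ≤
      (Fintype.card α).choose k * (Fintype.card α).descFactorial k := by
  calc ∑ C ∈ powersetCard k (univ : Finset α), #(strictMonoOnPerms (C : Set α)ᶜ)
      ≤ ∑ _C ∈ powersetCard k (univ : Finset α), (Fintype.card α).descFactorial k :=
        sum_le_sum fun C hC => (mem_powersetCard.mp hC).2 ▸ card_strictMonoOnPerms_compl_le C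
    _ = (Fintype.card α).choose k * (Fintype.card α).descFactorial k := by
        rw [sum_const, card_powersetCard, card_univ, smul_eq_mul]

theorem ulamBall_subset_biUnion {n Δ : ℕ} (hΔ : Δ ≤ n) :
    {σ : Perm (Fin n) | ulamDist 1 σ ≤ Δ} ⊆
      ↑((powersetCard Δ univ).biUnion fun C : Finset (Fin n) =>
        strictMonoOnPerms (C : Set (Fin n))ᶜ) := by
  intro σ hσ
  obtain ⟨C, hC, hmono⟩ := exists_card_eq_strictMonoOn_compl_of_ulamDist_le hΔ hσ
  simp only [coe_biUnion, mem_coe, mem_powersetCard, Set.mem_iUnion]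
  exact ⟨C, ⟨subset_univ C, hC⟩, by simpa [strictMonoOnPerms] using hmono⟩

theorem one_mem_strictMonoOnPerms {α : Type*} [LinearOrder α] [Fintype α] (s : Set α) :
    1 ∈ strictMonoOnPerms s := by
  simp [strictMonoOnPerms, strictMono_id.strictMonoOn]

theorem ncard_ulamBall_le_card_biUnion {n Δ : ℕ} (hΔ : Δ ≤ n) :
    {σ : Perm (Fin n) | ulamDist 1 σ ≤ Δ}.ncard ≤
      #((powersetCard Δ univ).biUnion fun C : Finset (Fin n) =>
        strictMonoOnPerms (C : Set (Fin n))ᶜ) := by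
  simpa only [Set.ncard_coe_finset] using Set.ncard_le_ncard (ulamBall_subset_biUnion hΔ)

theorem ncard_ulamBall_le {n Δ : ℕ} (hΔ : Δ ≤ n) :
    {σ : Perm (Fin n) | ulamDist 1 σ ≤ Δ}.ncard ≤ n.choose Δ * n.descFactorial Δ := by
  simpa using (ncard_ulamBall_le_card_biUnion hΔ).trans
    (card_biUnion_le.trans (sum_card_strictMonoOnPerms_compl_le (α := Fin n) Δ))

theorem ncard_ulamBall_lt {n Δ : ℕ} (hΔ₀ : 0 < Δ) (hΔn : Δ < n) :
    {σ : Perm (Fin n) | ulamDist 1 σ ≤ Δ}.ncard < n.choose Δ * n.descFactorial Δ := by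
  have htwo : 1 < #(powersetCard Δ (univ : Finset (Fin n))) := by
    simpa using Nat.one_lt_choose hΔ₀ hΔn
  obtain ⟨C₁, hC₁, C₂, hC₂, hne⟩ := one_lt_card.mp htwo
  have hlt := card_biUnion_lt_sum_card
    (t := fun C : Finset (Fin n) => strictMonoOnPerms (C : Set (Fin n))ᶜ) hC₁ hC₂ hne
    (one_mem_strictMonoOnPerms _) (one_mem_strictMonoOnPerms _)
  simpa using (ncard_ulamBall_le_card_biUnion hΔn.le).trans_lt
    (hlt.trans_le (sum_card_strictMonoOnPerms_compl_le (α := Fin n) Δ))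

/-- Comparison of the Gilbert–Varshamov-type bound with the bound `(n-Δ)!/C(n,Δ)`:
the non-strict inequality holds for all `Δ ≤ n`, and the inequality is strict for
`0 < Δ < n - 1`. -/
theorem gv_vs_simple_bound (n Δ : ℕ) (hΔ : Δ ≤ n) :
    ((n - Δ).factorial : ℝ) / (n.choose Δ) ≤
        (n.factorial : ℝ) / ({σ : Equiv.Perm (Fin n) | ulamDist 1 σ ≤ Δ}.ncard) ∧
    (0 < Δ → Δ + 1 < n →
      ((n - Δ).factorial : ℝ) / (n.choose Δ) <
        (n.factorial : ℝ) / ({σ : Equiv.Perm (Fin n) | ulamDist 1 σ ≤ Δ}.ncard)) := by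
  have hball : 0 < {σ : Perm (Fin n) | ulamDist 1 σ ≤ Δ}.ncard :=
    (Set.ncard_pos (Set.toFinite _)).mpr ⟨1, by simp [ulamDist_self]⟩
  have hfactorial : (n.factorial : ℝ) = (n - Δ).factorial * n.descFactorial Δ := by
    exact_mod_cast (Nat.factorial_mul_descFactorial hΔ).symm
  have hchoose : 0 < (n.choose Δ : ℝ) := by exact_mod_cast Nat.choose_pos hΔ
  rw [hfactorial, div_le_div_iff₀ hchoose (by positivity),
    div_lt_div_iff₀ hchoose (by positivity), mul_assoc,
    mul_comm (n.descFactorial Δ : ℝ)]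
  refine ⟨?_, fun hΔ₀ hΔn => ?_⟩
  · gcongr
    exact_mod_cast ncard_ulamBall_le hΔ
  · gcongr
    exact_mod_cast ncard_ulamBall_lt hΔ₀ (by omega)
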